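/- Every unit disk in the Euclidean plane can be covered by at most five unit disks whose centers lie on the vertical lines x = k√3 + α for integers k, for any fixed shift α ∈ ℝ. -/

import Mathlib

open Real Metric

/-! Let `L` be the restriction line nearest to the centre `c`, so `|c₀ - L| ≤ √3/2`, and reflect so
that `c` lies on the side of `L` facing `L + √3`. The part of the disk in the strip `|x - L| ≤ √3/2`
is a union of vertical segments of length at most 2 at horizontal distance at most `√3/2` from `L`,
covered by the two disks centred on `L` at heights `c₁ ± 1/2`; likewise the part in
`|x - (L + √3)| ≤ √3/2` is covered by two disks on `L + √3`. What is left lies in `x < L - √3/2`,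
where every point is closer to `(L - √3, c₁)` than to `c`, so one more disk suffices. -/

lemma strip_cover {x w : ℝ} (hx : x ^ 2 ≤ 3 / 4) (hw : w ^ 2 ≤ 1) :
    x ^ 2 + (w - 1 / 2) ^ 2 ≤ 1 ∨ x ^ 2 + (w + 1 / 2) ^ 2 ≤ 1 := by
  rcases le_total 0 w with hw0 | hw0
  · left; nlinarith
  · right; nlinarith

lemma sq_le_three_quarters {x : ℝ} (h₁ : -(√3 / 2) ≤ x) (h₂ : x ≤ √3 / 2) : x ^ 2 ≤ 3 / 4 := by
  have h3 : √3 ^ 2 = 3 := sq_sqrt (by norm_num)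
  nlinarith [sq_le_sq' h₁ h₂]

lemma five_cover_of_nonneg {δ u w : ℝ} (hδ₀ : 0 ≤ δ) (hδ : δ ≤ √3 / 2)
    (h : (u - δ) ^ 2 + w ^ 2 ≤ 1) :
    u ^ 2 + (w - 1 / 2) ^ 2 ≤ 1 ∨ u ^ 2 + (w + 1 / 2) ^ 2 ≤ 1 ∨
      (u - √3) ^ 2 + (w - 1 / 2) ^ 2 ≤ 1 ∨ (u - √3) ^ 2 + (w + 1 / 2) ^ 2 ≤ 1 ∨
      (u + √3) ^ 2 + w ^ 2 ≤ 1 := by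
  have h3 : √3 ^ 2 = 3 := sq_sqrt (by norm_num)
  have h3_ge_one : 1 ≤ √3 := by nlinarith [sqrt_nonneg 3]
  have hw : w ^ 2 ≤ 1 := by nlinarith [sq_nonneg (u - δ)]
  have hu : u ≤ δ + 1 := by nlinarith [sq_nonneg w]
  rcases le_or_gt u (-(√3 / 2)) with h_left | h_left
  · -- `(u - δ)² - (u + √3)² = (δ + √3)(δ - 2u - √3) ≥ 0`
    right; right; right; right
    nlinarith [mul_nonneg (by positivity : 0 ≤ δ + √3) (by linarith : 0 ≤ δ - 2 * u - √3)]
  rcases le_or_gt u (√3 / 2) with h_right | h_right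
  · exact (strip_cover (sq_le_three_quarters h_left.le h_right) hw).imp_right Or.inl
  · right; right
    exact (strip_cover (sq_le_three_quarters (x := u - √3) (by linarith) (by linarith)) hw).imp_right
      Or.inl

lemma five_cover {s δ u w : ℝ} (hs : s = √3 ∨ s = -√3) (hδ : |δ| ≤ √3 / 2) (hsδ : 0 ≤ s * δ)
    (h : (u - δ) ^ 2 + w ^ 2 ≤ 1) :
    u ^ 2 + (w - 1 / 2) ^ 2 ≤ 1 ∨ u ^ 2 + (w + 1 / 2) ^ 2 ≤ 1 ∨
      (u - s) ^ 2 + (w - 1 / 2) ^ 2 ≤ 1 ∨ (u - s) ^ 2 + (w + 1 / 2) ^ 2 ≤ 1 ∨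
      (u + s) ^ 2 + w ^ 2 ≤ 1 := by
  have h3 : 0 < √3 := by positivity
  rcases hs with rfl | rfl
  · exact five_cover_of_nonneg (nonneg_of_mul_nonneg_right hsδ h3) (abs_le.mp hδ).2 h
  · have key := five_cover_of_nonneg (u := -u) (δ := -δ) (w := w)
      (by nlinarith) (by linarith [(abs_le.mp hδ).1]) (by linarith)
    ring_nf at key ⊢
    exact key

lemma EuclideanSpace.dist_le_one_iff_fin_two (p q : EuclideanSpace ℝ (Fin 2)) :
    dist p q ≤ 1 ↔ (p 0 - q 0) ^ 2 + (p 1 - q 1) ^ 2 ≤ 1 := by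
  simp [EuclideanSpace.dist_eq, Fin.sum_univ_two, Real.dist_eq, sq_abs]

lemma abs_sub_round_mul_add_le (x α : ℝ) {h : ℝ} (hh : 0 < h) :
    |x - (round ((x - α) / h) * h + α)| ≤ h / 2 := by
  have hx : x - (round ((x - α) / h) * h + α) = h * ((x - α) / h - round ((x - α) / h)) := by
    field_simp; ring
  rw [hx, abs_mul, abs_of_pos hh]
  nlinarith [abs_sub_round ((x - α) / h)]

noncomputable def fiveCenters (L y s : ℝ) : Finset (EuclideanSpace ℝ (Fin 2)) :=
  {!₂[L, y + 1 / 2], !₂[L, y - 1 / 2], !₂[L + s, y + 1 / 2], !₂[L + s, y - 1 / 2], !₂[L - s, y]}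

lemma card_fiveCenters_le (L y s : ℝ) : (fiveCenters L y s).card ≤ 5 :=
  Finset.card_le_five

lemma fiveCenters_on_lines (n e : ℤ) (y h α : ℝ) :
    ∀ q ∈ fiveCenters (n * h + α) y (e * h), ∃ k : ℤ, q 0 = k * h + α := by
  simp only [fiveCenters, Finset.mem_insert, Finset.mem_singleton]
  rintro q (rfl | rfl | rfl | rfl | rfl)
  · exact ⟨n, rfl⟩
  · exact ⟨n, rfl⟩
  · exact ⟨n + e, by push_cast; ring⟩
  · exact ⟨n + e, by push_cast; ring⟩
  · exact ⟨n - e, by push_cast; ring⟩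

lemma closedBall_subset_fiveCenters {c : EuclideanSpace ℝ (Fin 2)} {L s : ℝ}
    (hs : s = √3 ∨ s = -√3) (hδ : |c 0 - L| ≤ √3 / 2) (hsδ : 0 ≤ s * (c 0 - L)) :
    closedBall c 1 ⊆ ⋃ q ∈ fiveCenters L (c 1) s, closedBall q 1 := by
  intro p hp
  rw [mem_closedBall, EuclideanSpace.dist_le_one_iff_fin_two] at hp
  have key := five_cover (u := p 0 - L) (w := p 1 - c 1) hs hδ hsδ (by rwa [sub_sub_sub_cancel_right])
  simp only [Set.mem_iUnion, exists_prop, fiveCenters, Finset.mem_insert, Finset.mem_singleton,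
    exists_eq_or_imp, exists_eq_left, mem_closedBall, EuclideanSpace.dist_le_one_iff_fin_two]
  simp only [Matrix.cons_val_zero, Matrix.cons_val_one]
  ring_nf at key ⊢
  exact key

/-- Every Euclidean unit disk can be covered by at most five unit disks whose centers lie on
the vertical lines `x = k√3 + α`, `k ∈ ℤ`, for any fixed shift `α`. -/
theorem disk_covered_by_five_restricted (α : ℝ) (c : EuclideanSpace ℝ (Fin 2)) :
    ∃ s : Finset (EuclideanSpace ℝ (Fin 2)), s.card ≤ 5 ∧
      (∀ q ∈ s, ∃ k : ℤ, q 0 = k * Real.sqrt 3 + α) ∧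
      Metric.closedBall c 1 ⊆ ⋃ q ∈ s, Metric.closedBall q 1 := by
  set L := round ((c 0 - α) / √3) * √3 + α
  have hδ : |c 0 - L| ≤ √3 / 2 := abs_sub_round_mul_add_le _ _ (by positivity)
  obtain ⟨e, he, hsδ⟩ : ∃ e : ℤ, (e = 1 ∨ e = -1) ∧ 0 ≤ e * √3 * (c 0 - L) := by
    rcases le_total 0 (c 0 - L) with h | h
    · exact ⟨1, Or.inl rfl, by simpa using mul_nonneg (sqrt_nonneg 3) h⟩
    · exact ⟨-1, Or.inr rfl, by push_cast; nlinarith [sqrt_nonneg 3]⟩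
  have hs : (e : ℝ) * √3 = √3 ∨ (e : ℝ) * √3 = -√3 := by rcases he with rfl | rfl <;> simp
  exact ⟨fiveCenters L (c 1) (e * √3), card_fiveCenters_le _ _ _,
    fiveCenters_on_lines _ e _ _ _, closedBall_subset_fiveCenters hs hδ hsδ⟩
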